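/- Let d ≥ 1, let a > 0, and let y ∈ ℝ^d lie outside the closed cube Q_4(0) = [−2,2]^d. Then sup_{x ∈ Q_2(0)} e^{−a|x−y|²} ≤ 2^{d−1} e^{(d−1)a/2} · Σ_{n ∈ {−1,0,1}^d} e^{−a|n−y|²}. -/

import Mathlib

/-!
Round each coordinate of `y` to the nearest point `n` of `{-1, 0, 1}`. For `x ∈ [-1,1]^d` this
costs at most `1/4` per coordinate, `(n i - y i)² ≤ (x i - y i)² + 1/4`, and nothing at all in a
coordinate with `|y j| ≥ 1`, where `n j = ±1` lies between `x j` and `y j`. Since `y ∉ [-2,2]^d`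
such a coordinate exists, so `‖n - y‖² ≤ ‖x - y‖² + (d - 1)/4`, and the single lattice term at `n`
already dominates `exp (-a ‖x - y‖²)` up to the factor `exp ((d - 1) a / 2)`.
-/

open Finset

noncomputable def roundToUnitLattice (t : ℝ) : ℤ :=
  if t ≤ -(1 / 2) then -1 else if 1 / 2 ≤ t then 1 else 0

theorem roundToUnitLattice_mem (t : ℝ) : roundToUnitLattice t ∈ ({-1, 0, 1} : Finset ℤ) := by
  unfold roundToUnitLattice
  split_ifs <;> simp

theorem sq_roundToUnitLattice_sub_le {x : ℝ} (hx : |x| ≤ 1) (t : ℝ) :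
    ((roundToUnitLattice t : ℝ) - t) ^ 2 ≤ (x - t) ^ 2 + 1 / 4 := by
  obtain ⟨hx₁, hx₂⟩ := abs_le.mp hx
  unfold roundToUnitLattice
  split_ifs with hneg hpos <;> push_cast
  · nlinarith [mul_nonneg (by linarith : (0 : ℝ) ≤ x + 1) (by linarith : (0 : ℝ) ≤ -2 * t - 1)]
  · nlinarith [mul_nonneg (by linarith : (0 : ℝ) ≤ 1 - x) (by linarith : (0 : ℝ) ≤ 2 * t - 1)]
  · nlinarith

theorem sq_roundToUnitLattice_sub_le_of_one_le_abs {x t : ℝ} (hx : |x| ≤ 1) (ht : 1 ≤ |t|) :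
    ((roundToUnitLattice t : ℝ) - t) ^ 2 ≤ (x - t) ^ 2 := by
  obtain ⟨hx₁, hx₂⟩ := abs_le.mp hx
  rcases le_abs'.mp ht with ht | ht
  · rw [roundToUnitLattice, if_pos (by linarith)]
    push_cast
    nlinarith
  · rw [roundToUnitLattice, if_neg (by linarith), if_pos (by linarith)]
    push_cast
    nlinarith

theorem Finset.sum_le_sum_add_card_sub_one_mul {ι : Type*} [Fintype ι] [DecidableEq ι]
    {f g : ι → ℝ} {c : ℝ} (j : ι) (hj : f j ≤ g j) (h : ∀ i ≠ j, f i ≤ g i + c) :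
    ∑ i, f i ≤ ∑ i, g i + ((Fintype.card ι : ℝ) - 1) * c := by
  have hrest : ∑ i ∈ univ.erase j, f i ≤ ∑ i ∈ univ.erase j, (g i + c) :=
    sum_le_sum fun i hi => h i (ne_of_mem_erase hi)
  have hcard : ((univ.erase j).card : ℝ) = Fintype.card ι - 1 := by
    rw [card_erase_of_mem (mem_univ j), card_univ, Nat.cast_sub (Fintype.card_pos_iff.mpr ⟨j⟩),
      Nat.cast_one]
  rw [← add_sum_erase _ f (mem_univ j), ← add_sum_erase _ g (mem_univ j)]
  rw [sum_add_distrib, sum_const, nsmul_eq_mul, hcard] at hrest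
  linarith

noncomputable def roundToUnitCube {ι : Type*} (y : EuclideanSpace ℝ ι) : EuclideanSpace ℝ ι :=
  WithLp.toLp 2 fun i => (roundToUnitLattice (y i) : ℝ)

theorem norm_roundToUnitCube_sub_sq_le {ι : Type*} [Fintype ι] {x y : EuclideanSpace ℝ ι}
    (hx : ∀ i, |x i| ≤ 1) {j : ι} (hj : 1 ≤ |y j|) :
    ‖roundToUnitCube y - y‖ ^ 2 ≤ ‖x - y‖ ^ 2 + ((Fintype.card ι : ℝ) - 1) / 4 := by
  classical
  rw [EuclideanSpace.real_norm_sq_eq, EuclideanSpace.real_norm_sq_eq, div_eq_mul_one_div]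
  exact sum_le_sum_add_card_sub_one_mul j (sq_roundToUnitLattice_sub_le_of_one_le_abs (hx j) hj)
    fun i _ => sq_roundToUnitLattice_sub_le (hx i) (y i)

theorem lattice_gaussian_bound_outside
    (d : ℕ) (a : ℝ) (ha : 0 < a)
    (y : EuclideanSpace ℝ (Fin d)) (hy : ¬ ∀ i, |y i| ≤ 2) :
    ∀ x : EuclideanSpace ℝ (Fin d), (∀ i, |x i| ≤ 1) →
      Real.exp (-a * ‖x - y‖ ^ 2) ≤
        2 ^ (d - 1) * Real.exp (((d : ℝ) - 1) * a / 2) *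
          ∑ m ∈ Fintype.piFinset (fun _ : Fin d => ({-1, 0, 1} : Finset ℤ)),
            Real.exp (-a * ‖(show EuclideanSpace ℝ (Fin d) from WithLp.toLp 2 (fun i => (m i : ℝ))) - y‖ ^ 2) := by
  intro x hx
  obtain ⟨j, hj⟩ := not_forall.mp hy
  have hd : (1 : ℝ) ≤ d := by exact_mod_cast Fin.pos j
  have hround := norm_roundToUnitCube_sub_sq_le hx (j := j) (by linarith [not_le.mp hj])
  rw [Fintype.card_fin] at hround
  have hterm : Real.exp (-a * ‖x - y‖ ^ 2) ≤
      Real.exp (((d : ℝ) - 1) * a / 2) * Real.exp (-a * ‖roundToUnitCube y - y‖ ^ 2) := by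
    rw [← Real.exp_add, Real.exp_le_exp]
    nlinarith
  have hsingle := single_le_sum (s := Fintype.piFinset fun _ : Fin d => ({-1, 0, 1} : Finset ℤ))
    (f := fun m : Fin d → ℤ =>
      Real.exp (-a * ‖(WithLp.toLp 2 fun i => (m i : ℝ) : EuclideanSpace ℝ (Fin d)) - y‖ ^ 2))
    (fun _ _ => (Real.exp_pos _).le)
    (Fintype.mem_piFinset.mpr fun i => roundToUnitLattice_mem (y i))
  have hpow : (1 : ℝ) ≤ 2 ^ (d - 1) := one_le_pow₀ one_le_two
  calc Real.exp (-a * ‖x - y‖ ^ 2)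
      ≤ 1 * Real.exp (((d : ℝ) - 1) * a / 2) * Real.exp (-a * ‖roundToUnitCube y - y‖ ^ 2) := by
        rwa [one_mul]
    _ ≤ _ := by gcongr; exact hsingle
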